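/- No null Cartan curve c in Minkowski 4-space with k₂(s) ≠ 0 for all s (equivalently, with {c', c'', c⁽³⁾, c⁽⁴⁾} linearly independent) admits a Bertrand mate: if c̄(s̄) = c(s) + αW₁(s) is a null Cartan curve with W̄₁ = ±W₁, then α = 0 and c̄ coincides with c. -/

import Mathlib

/-!
Differentiating `c̄ ∘ φ = c + α W₁` gives `φ' L̄ = (1 - α k₁) L - α N`. Since `L̄` is null and
`⟨L, N⟩ = 1`, the square of the right-hand side, `-2α(1 - α k₁)`, vanishes; so if `α ≠ 0` then
`α k₁ = 1` and `φ' L̄ = -α N`. Differentiating once more and pairing with `W₂` kills every term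
on the mate's side (`L̄` is proportional to `N`, and `W̄₁ = ±W₁`), while on the side of `c` it
leaves `-α k₂ ≠ 0`.
-/

noncomputable section

/-- Minkowski inner product on ℝ⁴ with signature (-,+,+,+). -/
def mink (x y : Fin 4 → ℝ) : ℝ := -(x 0 * y 0) + x 1 * y 1 + x 2 * y 2 + x 3 * y 3

section MinkowskiAlgebra

variable (a : ℝ) (x y z : Fin 4 → ℝ)

lemma mink_comm : mink x y = mink y x := by
  simp only [mink]; ring

lemma mink_smul_left : mink (a • x) y = a * mink x y := by
  simp only [mink, Pi.smul_apply, smul_eq_mul]; ring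

lemma mink_smul_right : mink x (a • y) = a * mink x y := by
  simp only [mink, Pi.smul_apply, smul_eq_mul]; ring

lemma mink_add_left : mink (x + y) z = mink x z + mink y z := by
  simp only [mink, Pi.add_apply]; ring

lemma mink_add_right : mink x (y + z) = mink x y + mink x z := by
  simp only [mink, Pi.add_apply]; ring

lemma mink_sub_left : mink (x - y) z = mink x z - mink y z := by
  simp only [mink, Pi.sub_apply]; ring

lemma mink_neg_left : mink (-x) y = -mink x y := by
  simp only [mink, Pi.neg_apply]; ring

lemma ne_zero_of_mink_ne_zero {x y : Fin 4 → ℝ} (h : mink x y ≠ 0) : x ≠ 0 := by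
  rintro rfl
  simp [mink] at h

lemma mink_self_add_smul_of_null {L N : Fin 4 → ℝ} (hLL : mink L L = 0) (hNN : mink N N = 0)
    (hLN : mink L N = 1) (a b : ℝ) : mink (a • L + b • N) (a • L + b • N) = 2 * a * b := by
  simp only [mink_add_left, mink_add_right, mink_smul_left, mink_smul_right, hLL, hNN, hLN,
    mink_comm N L]
  ring

end MinkowskiAlgebra

lemma deriv_add_smul_principalNormal {c L N W₁ : ℝ → Fin 4 → ℝ} {k₁ : ℝ → ℝ} (α s : ℝ)
    (hcL : deriv c s = L s) (hW₁fr : deriv W₁ s = -(k₁ s) • L s - N s)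
    (hLL : mink (L s) (L s) = 0) (hLN : mink (L s) (N s) = 1) :
    deriv (fun t => c t + α • W₁ t) s = (1 - α * k₁ s) • L s - α • N s := by
  -- `deriv` is `0` where undefined, and both prescribed derivatives are nonzero.
  have hc : DifferentiableAt ℝ c s :=
    differentiableAt_of_deriv_ne_zero <| by
      rw [hcL]; exact ne_zero_of_mink_ne_zero (y := N s) (by simp [hLN])
  have hW₁L : mink (deriv W₁ s) (L s) = -1 := by
    rw [hW₁fr, mink_sub_left, mink_smul_left, hLL, mink_comm, hLN]; ring
  have hW₁ : DifferentiableAt ℝ W₁ s :=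
    differentiableAt_of_deriv_ne_zero (ne_zero_of_mink_ne_zero (y := L s) (by simp [hW₁L]))
  rw [deriv_fun_add (g := fun t => α • W₁ t) hc (hW₁.const_smul α),
    deriv_fun_const_smul α hW₁, hcL, hW₁fr]
  module

theorem stmt4_general (c c' L N W₁ W₂ L' W₁' : ℝ → (Fin 4 → ℝ)) (k₁ k₂ : ℝ → ℝ)
    (α : ℝ) (φ : ℝ → ℝ)
    -- Cartan–Frenet equations of c:
    (hcL : ∀ s, deriv c s = L s)
    (hNfr : ∀ s, deriv N s = k₁ s • W₁ s + k₂ s • W₂ s)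
    (hW₁fr : ∀ s, deriv W₁ s = -(k₁ s) • L s - N s)
    -- pseudo-orthonormality of the frame of c:
    (hLL : ∀ s, mink (L s) (L s) = 0) (hNN : ∀ s, mink (N s) (N s) = 0)
    (hLN : ∀ s, mink (L s) (N s) = 1)
    (hW₂W₂ : ∀ s, mink (W₂ s) (W₂ s) = 1)
    (hW₁W₂ : ∀ s, mink (W₁ s) (W₂ s) = 0)
    (hNW₂ : ∀ s, mink (N s) (W₂ s) = 0)
    -- {c',c'',c⁽³⁾,c⁽⁴⁾} linearly independent, equivalently k₂ never vanishes:
    (hk₂ : ∀ s, k₂ s ≠ 0)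
    -- the candidate Bertrand mate:
    (hpair : ∀ s, c' (φ s) = c s + α • W₁ s)
    (hnormals : ∀ s, W₁' (φ s) = W₁ s ∨ W₁' (φ s) = -W₁ s)
    (hmate : ∀ s, deriv (fun t => c' (φ t)) s = deriv φ s • L' (φ s))
    -- barred Frenet equation L̄' = W̄₁ together with the chain rule:
    (hmate2 : ∀ s, deriv (fun t => deriv φ t • L' (φ t)) s =
      deriv (deriv φ) s • L' (φ s) + (deriv φ s) ^ 2 • W₁' (φ s))
    -- the mate's tangent L̄ is null and orthogonal to W̄₁:
    (hL'null : ∀ x, mink (L' x) (L' x) = 0) :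
    α = 0 ∧ ∀ s, c' (φ s) = c s := by
  have htangent : ∀ s, deriv φ s • L' (φ s) = (1 - α * k₁ s) • L s - α • N s := fun s => by
    rw [← hmate, funext hpair,
      deriv_add_smul_principalNormal α s (hcL s) (hW₁fr s) (hLL s) (hLN s)]
  have hnull : ∀ s, α * (1 - α * k₁ s) = 0 := fun s => by
    have h := mink_self_add_smul_of_null (hLL s) (hNN s) (hLN s) (1 - α * k₁ s) (-α)
    rw [neg_smul, ← sub_eq_add_neg, ← htangent, mink_smul_left, mink_smul_right,
      hL'null] at h
    linarith
  have hα : α = 0 := by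
    by_contra hα
    have htangentN : ∀ t, deriv φ t • L' (φ t) = (-α) • N t := fun t => by
      have hk₁ : 1 = α * k₁ t := sub_eq_zero.mp ((mul_eq_zero.mp (hnull t)).resolve_left hα)
      rw [htangent, ← hk₁, sub_self, zero_smul, zero_sub, neg_smul]
    have hφ' : deriv φ 0 ≠ 0 := by
      intro h0
      have h := congrArg (mink · (L 0)) (htangentN 0)
      simp only [h0, zero_smul, mink_smul_left, mink_comm (N 0), hLN] at h
      simp [mink, hα] at h
    have hL'W₂ : mink (L' (φ 0)) (W₂ 0) = 0 := by
      have h := congrArg (mink · (W₂ 0)) (htangentN 0)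
      simp only [mink_smul_left, hNW₂, mul_zero] at h
      exact (mul_eq_zero.mp h).resolve_left hφ'
    have hW₁'W₂ : mink (W₁' (φ 0)) (W₂ 0) = 0 := by
      rcases hnormals 0 with h | h <;> simp [h, mink_neg_left, hW₁W₂]
    have h := congrArg (mink · (W₂ 0)) (hmate2 0)
    simp only [funext htangentN, deriv_fun_const_smul_field, hNfr, mink_smul_left,
      mink_add_left, hL'W₂, hW₁'W₂, hW₁W₂, hW₂W₂] at h
    exact hk₂ 0 ((mul_eq_zero.mp (by linarith : α * k₂ 0 = 0)).resolve_left hα)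
  exact ⟨hα, fun s => by simpa [hα] using hpair s⟩

/-- No null Cartan curve in `R⁴₁` with `k₂(s) ≠ 0` for all `s` admits a
Bertrand mate: if `c̄(s̄) = c(s) + α W₁(s)` is a null Cartan curve with `W̄₁ = ±W₁`,
then `α = 0` and `c̄` coincides with `c`. -/
theorem stmt4 (c c' L N W₁ W₂ L' W₁' : ℝ → (Fin 4 → ℝ)) (k₁ k₂ : ℝ → ℝ)
    (α : ℝ) (φ : ℝ → ℝ)
    -- Cartan–Frenet equations of c:
    (hcL : ∀ s, deriv c s = L s)
    (hLfr : ∀ s, deriv L s = W₁ s)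
    (hNfr : ∀ s, deriv N s = k₁ s • W₁ s + k₂ s • W₂ s)
    (hW₁fr : ∀ s, deriv W₁ s = -(k₁ s) • L s - N s)
    (hW₂fr : ∀ s, deriv W₂ s = -(k₂ s) • L s)
    -- pseudo-orthonormality of the frame of c:
    (hLL : ∀ s, mink (L s) (L s) = 0) (hNN : ∀ s, mink (N s) (N s) = 0)
    (hLN : ∀ s, mink (L s) (N s) = 1)
    (hW₁W₁ : ∀ s, mink (W₁ s) (W₁ s) = 1) (hW₂W₂ : ∀ s, mink (W₂ s) (W₂ s) = 1)
    (hW₁W₂ : ∀ s, mink (W₁ s) (W₂ s) = 0)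
    (hLW₁ : ∀ s, mink (L s) (W₁ s) = 0) (hLW₂ : ∀ s, mink (L s) (W₂ s) = 0)
    (hNW₁ : ∀ s, mink (N s) (W₁ s) = 0) (hNW₂ : ∀ s, mink (N s) (W₂ s) = 0)
    -- {c',c'',c⁽³⁾,c⁽⁴⁾} linearly independent, equivalently k₂ never vanishes:
    (hk₂ : ∀ s, k₂ s ≠ 0)
    -- the candidate Bertrand mate:
    (hpair : ∀ s, c' (φ s) = c s + α • W₁ s)
    (hnormals : ∀ s, W₁' (φ s) = W₁ s ∨ W₁' (φ s) = -W₁ s)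
    (hφ : Differentiable ℝ φ)
    (hmate : ∀ s, deriv (fun t => c' (φ t)) s = deriv φ s • L' (φ s))
    -- barred Frenet equation L̄' = W̄₁ together with the chain rule:
    (hmate2 : ∀ s, deriv (fun t => deriv φ t • L' (φ t)) s =
      deriv (deriv φ) s • L' (φ s) + (deriv φ s) ^ 2 • W₁' (φ s))
    -- the mate's tangent L̄ is null and orthogonal to W̄₁:
    (hL'null : ∀ x, mink (L' x) (L' x) = 0)
    (hL'W₁' : ∀ x, mink (L' x) (W₁' x) = 0) :
    α = 0 ∧ ∀ s, c' (φ s) = c s :=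
  stmt4_general c c' L N W₁ W₂ L' W₁' k₁ k₂ α φ hcL hNfr hW₁fr hLL hNN hLN hW₂W₂ hW₁W₂ hNW₂ hk₂
    hpair hnormals hmate hmate2 hL'null
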